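/- arXiv:0902.1306 — 3 statements merged into one kernel-verified Lean document; each statement's English description precedes it below -/
import Mathlib

section
/- For the spherical proximity map on the real line based on Y_m = {y1 < y2 < ... < ym}, if x and y lie in distinct open intervals (y_{i-1}, y_i) and (y_{j-1}, y_j) with i ≠ j, then N_S(x) ∩ N_S(y) = ∅. -/
/-!
The radius `r x` is at most the distance from `x` to each endpoint of its cell, so the proximity
region of `x` stays inside that cell; distinct cells of a monotone sequence are disjoint.
-/

open Set Function

theorem Ioo_sub_add_subset_Ioo {a b x ρ : ℝ} (ha : ρ ≤ x - a) (hb : ρ ≤ b - x) :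
    Ioo (x - ρ) (x + ρ) ⊆ Ioo a b :=
  Ioo_subset_Ioo (by linarith) (by linarith)

theorem iInf_abs_sub_le {ι : Type*} (y : ι → ℝ) (x : ℝ) (k : ι) :
    ⨅ l, |x - y l| ≤ |x - y k| :=
  ciInf_le ⟨0, by rintro _ ⟨l, rfl⟩; exact abs_nonneg _⟩ k

theorem Ioo_iInf_abs_sub_subset_Ioo {ι : Type*} (y : ι → ℝ) {k l : ι} {x : ℝ}
    (hx : x ∈ Ioo (y k) (y l)) :
    Ioo (x - ⨅ n, |x - y n|) (x + ⨅ n, |x - y n|) ⊆ Ioo (y k) (y l) := by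
  have hk : ⨅ n, |x - y n| ≤ x - y k := by
    simpa [abs_of_pos (sub_pos.2 hx.1)] using iInf_abs_sub_le y x k
  have hl : ⨅ n, |x - y n| ≤ y l - x := by
    simpa [abs_of_neg (sub_neg.2 hx.2)] using iInf_abs_sub_le y x l
  exact Ioo_sub_add_subset_Ioo hk hl

theorem Monotone.pairwise_disjoint_on_Ioo_castSucc_succ {α : Type*} [Preorder α] {m : ℕ}
    {y : Fin (m + 1) → α} (hy : Monotone y) :
    Pairwise (Disjoint on fun i : Fin m => Ioo (y i.castSucc) (y i.succ)) :=
  (pairwise_disjoint_on _).2 fun _ _ hij =>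
    disjoint_iff_inf_le.2 fun _ ⟨⟨_, h₁⟩, ⟨h₂, _⟩⟩ =>
      h₂.not_ge <| h₁.le.trans <| hy <| Fin.succ_le_castSucc_iff.2 hij

/-- Spherical proximity regions of points in distinct intervals of the
intervalization of `ℝ` by `y₁ < ⋯ < yₘ` are disjoint. -/
theorem spherical_disjoint_across_intervals
    (m : ℕ) (y : Fin (m + 1) → ℝ) (hy : StrictMono y)
    (r : ℝ → ℝ) (hr : ∀ x, r x = ⨅ k, |x - y k|)
    (N : ℝ → Set ℝ) (hN : ∀ x, N x = Set.Ioo (x - r x) (x + r x))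
    (i j : Fin m) (hij : i ≠ j) (x z : ℝ)
    (hx : x ∈ Set.Ioo (y i.castSucc) (y i.succ))
    (hz : z ∈ Set.Ioo (y j.castSucc) (y j.succ)) :
    N x ∩ N z = ∅ := by
  rw [hN, hN, hr, hr, ← disjoint_iff_inter_eq_empty]
  exact (hy.monotone.pairwise_disjoint_on_Ioo_castSucc_succ hij).mono
    (Ioo_iInf_abs_sub_subset_Ioo y hx) (Ioo_iInf_abs_sub_subset_Ioo y hz)
end

section
/- Let f(x,y) = (8/(3π)) sin(x) sin(y) sin(x+y) on the region {(x,y) : x > 0, y > 0, x + y < π}. Then the double integral of f over this region equals 1; i.e., f is a probability density. -/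
/-!
Integrating in `y` first is elementary after the product-to-sum identity
`sin y sin (x + y) = (cos x - cos (2y + x)) / 2`, and leaves
`sin x ((π - x) cos x + sin x) / 2`, whose integral over `[0, π]` is `3π/8`.
-/

open Real intervalIntegral

lemma sin_mul_sin_add (x y : ℝ) : sin y * sin (x + y) = (cos x - cos (2 * y + x)) / 2 := by
  rw [cos_add, sin_add, cos_two_mul, sin_two_mul, cos_sq']
  ring

lemma integral_sin_mul_sin_add (x a b : ℝ) :
    ∫ y in a..b, sin y * sin (x + y) =
      ((b - a) * cos x - (sin (2 * b + x) - sin (2 * a + x)) / 2) / 2 := by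
  simp_rw [sin_mul_sin_add]
  have hcos : IntervalIntegrable (fun y => cos (2 * y + x)) MeasureTheory.volume a b :=
    (by fun_prop : Continuous fun y => cos (2 * y + x)).intervalIntegrable _ _
  rw [integral_div, integral_sub intervalIntegrable_const hcos, integral_const,
    integral_comp_mul_add (fun y => cos y) two_ne_zero, integral_cos]
  simp only [smul_eq_mul]
  ring

lemma integral_sin_mul_sin_add_zero_pi_sub (x : ℝ) :
    ∫ y in (0 : ℝ)..π - x, sin y * sin (x + y) = ((π - x) * cos x + sin x) / 2 := by
  have h : sin (2 * (π - x) + x) = -sin x := by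
    rw [show 2 * (π - x) + x = -x + 2 * π by ring, sin_add_two_pi, sin_neg]
  rw [integral_sin_mul_sin_add, h]
  simp only [mul_zero, zero_add, sub_zero]
  ring

lemma integral_pi_sub_mul_sin_two_mul :
    ∫ x in (0 : ℝ)..π, (π - x) * sin (2 * x) = π / 2 := by
  have hderiv : ∀ x ∈ Set.uIcc 0 π,
      HasDerivAt (fun x => -((π - x) * cos (2 * x)) / 2 - sin (2 * x) / 4)
        ((π - x) * sin (2 * x)) x := by
    intro x _
    have hlin : HasDerivAt (fun x : ℝ => 2 * x) 2 x := by
      simpa using (hasDerivAt_id' x).const_mul 2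
    refine (((((hasDerivAt_id' x).const_sub π).mul hlin.cos).neg.div_const 2).sub
      (hlin.sin.div_const 4)).congr_deriv ?_
    ring
  rw [integral_eq_sub_of_hasDerivAt hderiv ((by fun_prop : Continuous _).intervalIntegrable _ _)]
  simp only [sub_self, cos_two_pi, mul_one, neg_zero, zero_div, sin_two_pi, sub_zero, mul_zero,
    cos_zero, sin_zero, zero_sub]
  ring

lemma integral_sin_mul_pi_sub_mul_cos_add_sin :
    ∫ x in (0 : ℝ)..π, sin x * ((π - x) * cos x + sin x) = 3 * π / 4 := by
  have h (x : ℝ) : sin x * ((π - x) * cos x + sin x) = (π - x) * sin (2 * x) / 2 + sin x ^ 2 := by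
    rw [sin_two_mul]
    ring
  simp_rw [h]
  rw [integral_add ((by fun_prop : Continuous _).intervalIntegrable _ _)
      ((by fun_prop : Continuous _).intervalIntegrable _ _),
    integral_div, integral_pi_sub_mul_sin_two_mul, integral_sin_sq]
  simp only [sin_zero, cos_zero, mul_one, sin_pi, cos_pi, mul_neg, neg_zero, sub_self, zero_add,
    sub_zero]
  ring

/-- The joint density `(8/(3π)) sin x sin y sin(x+y)` of a pair of inner angles
of a Poisson Delaunay triangle integrates to `1` over `{x>0, y>0, x+y<π}`. -/
theorem poisson_delaunay_pair_angle_density_integrates_to_one :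
    (∫ x in (0 : ℝ)..π, ∫ y in (0 : ℝ)..(π - x),
        (8 / (3 * π)) * (Real.sin x * Real.sin y * Real.sin (x + y))) = 1 := by
  have inner (x : ℝ) : ∫ y in (0 : ℝ)..(π - x), (8 / (3 * π)) * (sin x * sin y * sin (x + y)) =
      4 / (3 * π) * (sin x * ((π - x) * cos x + sin x)) := by
    simp_rw [mul_assoc (sin x)]
    rw [integral_const_mul, integral_const_mul, integral_sin_mul_sin_add_zero_pi_sub]
    ring
  simp_rw [inner]
  rw [integral_const_mul, integral_sin_mul_pi_sub_mul_cos_add_sin]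
  field_simp
end

section
/- Let f(x) = (4/(3π)) ((π - x) cos x + sin x) sin x for 0 < x < π. If X has density f, then E[X] = π/3 and E[X²] = 2π²/9 − 5/6. -/
/-!
On `(0, π)` the density is `4/(3π)` times `k(x) = ((π - x) cos x + sin x) sin x
= ((π - x) sin 2x + 1 - cos 2x) / 2`, which is nonnegative because `sin t ≥ t cos t` on `[0, π]`.
Integrating by parts, `x k(x)` and `x² k(x)` have primitives `p(x) sin 2x + q(x) cos 2x + r(x)`
with polynomials `p, q, r`; between `0` and `π` only `q + r` contributes, giving
`∫₀^π x k = π²/4` and `∫₀^π x² k = π³/6 - 5π/8`.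
-/

open Real MeasureTheory

theorem integral_withDensity_ofReal_ite_Ioo {a b : ℝ} (hab : a ≤ b) {f : ℝ → ℝ}
    (hfm : Measurable f) (hf : ∀ x ∈ Set.Ioo a b, 0 ≤ f x) (g : ℝ → ℝ) :
    ∫ x, g x ∂(volume.withDensity fun x => ENNReal.ofReal (if x ∈ Set.Ioo a b then f x else 0))
      = ∫ x in a..b, g x * f x := by
  have hm : Measurable fun x => if x ∈ Set.Ioo a b then f x else 0 :=
    hfm.ite measurableSet_Ioo measurable_const
  rw [integral_withDensity_eq_integral_toReal_smul hm.ennreal_ofReal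
    (.of_forall fun _ => ENNReal.ofReal_lt_top), intervalIntegral.integral_of_le hab,
    integral_Ioc_eq_integral_Ioo, ← integral_indicator measurableSet_Ioo]
  congr 1 with x
  by_cases hx : x ∈ Set.Ioo a b
  · simp [hx, ENNReal.toReal_ofReal (hf x hx), mul_comm]
  · simp [hx]

noncomputable def angleKernel (x : ℝ) : ℝ := ((π - x) * cos x + sin x) * sin x

@[fun_prop]
theorem continuous_angleKernel : Continuous angleKernel := by
  unfold angleKernel; fun_prop

theorem sin_sub_mul_cos_nonneg {t : ℝ} (h0 : 0 ≤ t) (hπ : t ≤ π) : 0 ≤ sin t - t * cos t := by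
  rcases lt_or_ge t (π / 2) with ht | ht
  · have hc : 0 < cos t := cos_pos_of_mem_Ioo ⟨by linarith [pi_pos], ht⟩
    have := le_tan h0 ht
    rw [tan_eq_sin_div_cos, le_div_iff₀ hc] at this
    linarith
  · have := cos_nonpos_of_pi_div_two_le_of_le ht (by linarith [pi_pos])
    nlinarith [sin_nonneg_of_nonneg_of_le_pi h0 hπ]

theorem angleKernel_nonneg {x : ℝ} (h0 : 0 ≤ x) (hπ : x ≤ π) : 0 ≤ angleKernel x := by
  have h := sin_sub_mul_cos_nonneg (sub_nonneg.2 hπ) (sub_le_self π h0)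
  rw [sin_pi_sub, cos_pi_sub] at h
  exact mul_nonneg (by linarith) (sin_nonneg_of_nonneg_of_le_pi h0 hπ)

section Primitive

open Polynomial

theorem hasDerivAt_eval_mul_sin_two_mul_add (p q r : ℝ[X]) (x : ℝ) :
    HasDerivAt (fun y => p.eval y * sin (2 * y) + q.eval y * cos (2 * y) + r.eval y)
      ((p.derivative.eval x - 2 * q.eval x) * sin (2 * x)
        + (q.derivative.eval x + 2 * p.eval x) * cos (2 * x) + r.derivative.eval x) x := by
  have hs : HasDerivAt (fun y => sin (2 * y)) (cos (2 * x) * 2) x :=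
    (hasDerivAt_sin _).comp x ((hasDerivAt_id x).const_mul 2 |>.congr_deriv (mul_one 2))
  have hc : HasDerivAt (fun y => cos (2 * y)) (-sin (2 * x) * 2) x :=
    (hasDerivAt_cos _).comp x ((hasDerivAt_id x).const_mul 2 |>.congr_deriv (mul_one 2))
  exact ((((p.hasDerivAt x).mul hs).add ((q.hasDerivAt x).mul hc)).add (r.hasDerivAt x)).congr_deriv
    (by ring)

theorem integral_zero_pi_eq_of_eval_mul_sin_two_mul_add (p q r : ℝ[X]) {g : ℝ → ℝ}
    (hg : Continuous g)
    (h : ∀ x, g x = (p.derivative.eval x - 2 * q.eval x) * sin (2 * x)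
        + (q.derivative.eval x + 2 * p.eval x) * cos (2 * x) + r.derivative.eval x) :
    ∫ x in (0 : ℝ)..π, g x = q.eval π + r.eval π - (q.eval 0 + r.eval 0) := by
  rw [intervalIntegral.integral_eq_sub_of_hasDerivAt
    (fun x _ => (h x).symm ▸ hasDerivAt_eval_mul_sin_two_mul_add p q r x)
    (hg.intervalIntegrable 0 π)]
  simp

theorem integral_id_mul_angleKernel : ∫ x in (0 : ℝ)..π, x * angleKernel x = π ^ 2 / 4 := by
  rw [integral_zero_pi_eq_of_eval_mul_sin_two_mul_add (C (π / 8) - C (1 / 2) * X)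
    (C (-1 / 4) - C (π / 4) * X + C (1 / 4) * X ^ 2) (C (1 / 4) * X ^ 2)
    (by fun_prop : Continuous fun x => x * angleKernel x)]
  · simp only [eval_add, eval_sub, eval_mul, eval_C, eval_X, eval_pow]; ring
  · intro x
    simp only [angleKernel, sin_two_mul, cos_two_mul, derivative_add, derivative_sub,
      derivative_mul, derivative_C, derivative_X, derivative_X_pow, eval_add, eval_sub, eval_mul,
      eval_C, eval_X, eval_pow, eval_zero, eval_one]
    linear_combination x * sin_sq_add_cos_sq x

theorem integral_sq_mul_angleKernel :
    ∫ x in (0 : ℝ)..π, x ^ 2 * angleKernel x = π ^ 3 / 6 - 5 * π / 8 := by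
  rw [integral_zero_pi_eq_of_eval_mul_sin_two_mul_add
    (C (5 / 16) + C (π / 4) * X - C (5 / 8) * X ^ 2)
    (C (π / 8) - C (5 / 8) * X - C (π / 4) * X ^ 2 + C (1 / 4) * X ^ 3) (C (1 / 6) * X ^ 3)
    (by fun_prop : Continuous fun x => x ^ 2 * angleKernel x)]
  · simp only [eval_add, eval_sub, eval_mul, eval_C, eval_X, eval_pow]; ring
  · intro x
    simp only [angleKernel, sin_two_mul, cos_two_mul, derivative_add, derivative_sub,
      derivative_mul, derivative_C, derivative_X, derivative_X_pow, eval_add, eval_sub, eval_mul,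
      eval_C, eval_X, eval_pow, eval_zero, eval_one]
    linear_combination x ^ 2 * sin_sq_add_cos_sq x

end Primitive

/-- If `X` has density `f(x) = (4/(3π))((π - x)cos x + sin x) sin x` on `(0, π)`,
then `E[X] = π/3` and `E[X²] = 2π²/9 - 5/6`. -/
theorem poisson_delaunay_angle_moments
    (f : ℝ → ℝ)
    (hf : ∀ x, f x = (4 / (3 * π)) * ((π - x) * Real.cos x + Real.sin x) * Real.sin x)
    (μ : Measure ℝ)
    (hμ : μ = volume.withDensity fun x =>
        ENNReal.ofReal (if x ∈ Set.Ioo 0 π then f x else 0)) :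
    (∫ x, x ∂μ) = π / 3 ∧ (∫ x, x ^ 2 ∂μ) = 2 * π ^ 2 / 9 - 5 / 6 := by
  have hf' : f = fun x => 4 / (3 * π) * angleKernel x := by
    ext x; rw [hf, angleKernel, mul_assoc]
  have hf_nonneg : ∀ x ∈ Set.Ioo 0 π, 0 ≤ f x := fun x hx => by
    rw [hf']; exact mul_nonneg (by positivity) (angleKernel_nonneg hx.1.le hx.2.le)
  have moment (g : ℝ → ℝ) :
      ∫ x, g x ∂μ = 4 / (3 * π) * ∫ x in (0 : ℝ)..π, g x * angleKernel x := by
    rw [hμ, integral_withDensity_ofReal_ite_Ioo pi_pos.le (by rw [hf']; fun_prop) hf_nonneg,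
      hf', ← intervalIntegral.integral_const_mul]
    simp only [mul_left_comm]
  rw [moment, moment, integral_id_mul_angleKernel, integral_sq_mul_angleKernel]
  constructor
  · field_simp
  · field_simp; ring
end
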